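/- For every G-invariant regular premeasure μ on the algebra generated by the open sets of X, the function D_μ on W(X,G) defined by D_μ([(f_1,...,f_n)]) = Σ_{i=1}^n μ(supp(f_i)) is a well-defined lower semi-continuous state on W(X,G). -/

import Mathlib

open scoped Pointwise NNReal ENNReal

variable {X : Type*} [TopologicalSpace X] {G : Type*} [Group G] [MulAction G X]

/-- The open support of a continuous `ℝ≥0`-valued function. -/
def osupp (f : C(X, ℝ≥0)) : Set X := {x | f x ≠ 0}

/-- Dynamical subequivalence `A ≼ B` for two finite tuples (lists) of subsets of `X`. -/
def SetSubeq (G : Type*) [Group G] [MulAction G X] (A B : List (Set X)) : Prop :=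
  ∀ F : Fin A.length → Set X,
    (∀ i, IsClosed (F i) ∧ F i ⊆ A.get i) →
    ∃ (J : Fin A.length → ℕ)
      (U : (i : Fin A.length) → Fin (J i) → Set X)
      (s : (i : Fin A.length) → Fin (J i) → G)
      (k : (i : Fin A.length) → Fin (J i) → Fin B.length),
      (∀ i j, IsOpen (U i j)) ∧
      (∀ i, F i ⊆ ⋃ j, U i j) ∧
      (∀ i j, (s i j) • U i j ⊆ B.get (k i j)) ∧
      (∀ (p q : Σ i : Fin A.length, Fin (J i)), p ≠ q → k p.1 p.2 = k q.1 q.2 →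
        Disjoint ((s p.1 p.2) • U p.1 p.2) ((s q.1 q.2) • U q.1 q.2))

/-- Dynamical subequivalence `a ≼ b` for tuples of nonnegative continuous functions. -/
def DynSubeq (G : Type*) [Group G] [MulAction G X] (a b : List C(X, ℝ≥0)) : Prop :=
  SetSubeq G (a.map osupp) (b.map osupp)

/-- The entrywise cut-down `(f - ε)₊`. -/
noncomputable def cutFun (f : C(X, ℝ≥0)) (ε : ℝ≥0) : C(X, ℝ≥0) :=
  ⟨fun x => f x - ε, f.continuous.sub continuous_const⟩

noncomputable def cutList (a : List C(X, ℝ≥0)) (ε : ℝ≥0) : List C(X, ℝ≥0) := a.map (cutFun · ε)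

/-- Membership in the algebra of sets generated by the open sets of `X`. -/
def InAlg (X : Type*) [TopologicalSpace X] (s : Set X) : Prop :=
  s ∈ MeasureTheory.generateSetAlgebra {t : Set X | IsOpen t}

/-- A `G`-invariant regular premeasure on the algebra generated by the open sets. -/
structure InvRegPremeasure (X : Type*) [TopologicalSpace X] (G : Type*) [Group G]
    [MulAction G X] where
  m : Set X → ℝ≥0∞
  junk : ∀ s : Set X, ¬ InAlg X s → m s = 0
  empty' : m ∅ = 0
  countably_additive : ∀ A : ℕ → Set X, (∀ n, InAlg X (A n)) →
    Pairwise (Function.onFun Disjoint A) → InAlg X (⋃ n, A n) →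
    m (⋃ n, A n) = ∑' n, m (A n)
  invariant : ∀ (g : G) (s : Set X), InAlg X s → m (g • s) = m s
  inner_regular : ∀ s : Set X, InAlg X s →
    m s = ⨆ (F : Set X) (_ : IsCompact F ∧ F ⊆ s), m F
  outer_regular : ∀ s : Set X, InAlg X s →
    m s = ⨅ (O : Set X) (_ : IsOpen O ∧ s ⊆ O), m O

/-- A state on the generalized type semigroup `W(X, G)`, described at the level of
`K(X, G)`: a function on tuples which is monotone for `≼`, additive for concatenation,
and vanishes on the empty tuple. -/
structure DynState (X : Type*) [TopologicalSpace X] (G : Type*) [Group G]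
    [MulAction G X] where
  toFun : List C(X, ℝ≥0) → ℝ≥0∞
  mono : ∀ a b, DynSubeq G a b → toFun a ≤ toFun b
  additive : ∀ a b, toFun (a ++ b) = toFun a + toFun b
  zero' : toFun [] = 0

/-- Lower semicontinuity of a state. -/
def DynState.LSC (D : DynState X G) : Prop :=
  ∀ a, D.toFun a = ⨆ (ε : ℝ≥0) (_ : 0 < ε), D.toFun (cutList a ε)

/-!
The support of `f` is the increasing union of the open sets `{f > 1/(n+1)}`, so continuity from
below of the premeasure gives `μ(supp f) = sup_n μ(supp (f - 1/(n+1))₊)`; this is lower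
semicontinuity, and it reduces monotonicity to the cut-downs. For `c > 0`, the relation `a ≼ b`
applied to the closed sets `{fᵢ ≥ c}` covers them by open pieces whose translates are packed
disjointly into the supports of the `gⱼ`; invariance and finite additivity of `μ` then give
`Σ μ{fᵢ ≥ c} ≤ Σ μ(supp gⱼ)`.
-/

open MeasureTheory

section AddContent

variable {α : Type*} {C : Set (Set α)}

theorem addContent_iUnion_eq_iSup_of_monotone {m : AddContent ℝ≥0∞ C} (hC : IsSetRing C)
    (m_iUnion : ∀ (f : ℕ → Set α) (_ : ∀ i, f i ∈ C) (_ : (⋃ i, f i) ∈ C)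
      (_hf_disj : Pairwise (Function.onFun Disjoint f)), m (⋃ i, f i) = ∑' i, m (f i))
    {f : ℕ → Set α} (hf_mono : Monotone f) (hf : ∀ i, f i ∈ C) (hf_Union : ⋃ i, f i ∈ C) :
    m (⋃ i, f i) = ⨆ i, m (f i) :=
  tendsto_nhds_unique
    (tendsto_atTop_addContent_iUnion_of_addContent_iUnion_eq_tsum hC m_iUnion hf_mono hf hf_Union)
    (tendsto_atTop_iSup fun _ _ hij =>
      addContent_mono hC.isSetSemiring (hf _) (hf _) (hf_mono hij))

theorem sum_addContent_le_of_pairwiseDisjoint_fibers {P ι : Type*} [Fintype P] [Fintype ι]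
    [DecidableEq ι] {m : AddContent ℝ≥0∞ C} (hC : IsSetRing C) {V : P → Set α} {B : ι → Set α}
    (k : P → ι) (hV : ∀ p, V p ∈ C) (hB : ∀ l, B l ∈ C) (hVB : ∀ p, V p ⊆ B (k p))
    (hdisj : ∀ p q, p ≠ q → k p = k q → Disjoint (V p) (V q)) :
    ∑ p, m (V p) ≤ ∑ l, m (B l) := by
  rw [← Finset.sum_fiberwise Finset.univ k]
  refine Finset.sum_le_sum fun l _ => ?_
  have hfiber : ((Finset.univ.filter fun p => k p = l : Finset P) : Set P).PairwiseDisjoint V :=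
    fun p hp q hq hpq => hdisj p q hpq (by simp_all)
  rw [← addContent_biUnion_eq hC (fun p _ => hV p) hfiber]
  refine addContent_mono hC.isSetSemiring (hC.biUnion_mem _ fun p _ => hV p) (hB l) ?_
  exact Set.iUnion₂_subset fun p hp => (Finset.mem_filter.1 hp).2 ▸ hVB p

end AddContent

theorem ENNReal.list_sum_map_iSup_of_monotone {ι : Type*} {l : List ι} {f : ι → ℕ → ℝ≥0∞}
    (hf : ∀ i, Monotone (f i)) :
    (l.map fun i => ⨆ n, f i n).sum = ⨆ n, (l.map fun i => f i n).sum := by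
  induction l with
  | nil => simp
  | cons i l ih =>
    simp only [List.map_cons, List.sum_cons, ih]
    exact ENNReal.iSup_add_iSup_of_monotone (hf i) fun n n' h => List.sum_le_sum fun j _ => hf j h

theorem isSetRing_inAlg : IsSetRing {s : Set X | InAlg X s} :=
  isSetAlgebra_generateSetAlgebra.isSetRing

theorem InAlg.of_isOpen {s : Set X} (hs : IsOpen s) : InAlg X s :=
  generateSetAlgebra.base s hs

theorem InAlg.of_isClosed {s : Set X} (hs : IsClosed s) : InAlg X s := by
  have h := generateSetAlgebra.compl _ (InAlg.of_isOpen hs.isOpen_compl)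
  rwa [compl_compl] at h

section Supports

theorem isOpen_osupp (f : C(X, ℝ≥0)) : IsOpen (osupp f) :=
  isOpen_ne_fun f.continuous continuous_const

@[simp]
theorem osupp_cutFun (f : C(X, ℝ≥0)) (ε : ℝ≥0) : osupp (cutFun f ε) = {x | ε < f x} := by
  ext x
  simp [osupp, cutFun, tsub_eq_zero_iff_le]

theorem osupp_cutFun_subset (f : C(X, ℝ≥0)) (ε : ℝ≥0) : osupp (cutFun f ε) ⊆ osupp f := by
  rw [osupp_cutFun]
  exact fun x hx => (pos_of_gt hx).ne'

theorem monotone_osupp_cutFun_inv (f : C(X, ℝ≥0)) :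
    Monotone fun n : ℕ => osupp (cutFun f ((n : ℝ≥0) + 1)⁻¹) := by
  intro n n' hn x hx
  simp only [osupp_cutFun, Set.mem_ofPred_eq] at hx ⊢
  refine lt_of_le_of_lt ?_ hx
  gcongr

theorem iUnion_osupp_cutFun_inv (f : C(X, ℝ≥0)) :
    ⋃ n : ℕ, osupp (cutFun f ((n : ℝ≥0) + 1)⁻¹) = osupp f := by
  refine subset_antisymm (Set.iUnion_subset fun n => osupp_cutFun_subset f _) fun x hx => ?_
  obtain ⟨n, hn⟩ := exists_nat_one_div_lt (pos_iff_ne_zero.2 hx)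
  exact Set.mem_iUnion.2 ⟨n, by simpa using hn⟩

end Supports

namespace InvRegPremeasure

variable (μ : InvRegPremeasure X G)

theorem m_iUnion {ι : Type*} [Countable ι] {f : ι → Set X} (hf : ∀ i, InAlg X (f i))
    (hd : Pairwise (Function.onFun Disjoint f)) (hU : InAlg X (⋃ i, f i)) :
    μ.m (⋃ i, f i) = ∑' i, μ.m (f i) := by
  cases nonempty_encodable ι
  rw [← Encodable.iUnion_decode₂, ← tsum_iUnion_decode₂ μ.m μ.empty']
  refine μ.countably_additive _ (fun n => ?_) (Encodable.iUnion_decode₂_disjoint_on hd)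
    (by rwa [Encodable.iUnion_decode₂])
  exact Encodable.iUnion_decode₂_cases generateSetAlgebra.empty hf

theorem m_union {s t : Set X} (hs : InAlg X s) (ht : InAlg X t) (hst : Disjoint s t) :
    μ.m (s ∪ t) = μ.m s + μ.m t := by
  rw [Set.union_eq_iUnion, μ.m_iUnion (Bool.forall_bool.2 ⟨ht, hs⟩)
    (pairwise_disjoint_on_bool.2 hst)
    (by rw [← Set.union_eq_iUnion]; exact isSetRing_inAlg.union_mem hs ht), tsum_fintype]
  simp

noncomputable def toAddContent : AddContent ℝ≥0∞ {s : Set X | InAlg X s} :=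
  isSetRing_inAlg.addContent_of_union μ.m μ.empty' μ.m_union

theorem m_mono {s t : Set X} (hs : InAlg X s) (ht : InAlg X t) (hst : s ⊆ t) :
    μ.m s ≤ μ.m t :=
  addContent_mono (m := μ.toAddContent) isSetRing_inAlg.isSetSemiring hs ht hst

theorem m_osupp_eq_iSup (f : C(X, ℝ≥0)) :
    μ.m (osupp f) = ⨆ n : ℕ, μ.m (osupp (cutFun f ((n : ℝ≥0) + 1)⁻¹)) := by
  conv_lhs => rw [← iUnion_osupp_cutFun_inv f]
  exact addContent_iUnion_eq_iSup_of_monotone (m := μ.toAddContent) isSetRing_inAlg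
    (fun A hA hU hd => μ.countably_additive A hA hd hU) (monotone_osupp_cutFun_inv f)
    (fun n => .of_isOpen (isOpen_osupp _))
    (by rw [iUnion_osupp_cutFun_inv]; exact .of_isOpen (isOpen_osupp f))

theorem sum_le_of_setSubeq [ContinuousConstSMul G X] {A B : List (Set X)}
    (hAB : SetSubeq G A B) (hB : ∀ j, InAlg X (B.get j)) {F : Fin A.length → Set X}
    (hF : ∀ i, IsClosed (F i) ∧ F i ⊆ A.get i) :
    ∑ i, μ.m (F i) ≤ ∑ j, μ.m (B.get j) := by
  obtain ⟨J, U, s, k, hU, hFU, hsUB, hdisj⟩ := hAB F hF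
  have hUalg : ∀ i j, InAlg X (U i j) := fun i j => .of_isOpen (hU i j)
  have hF_le : ∀ i, μ.m (F i) ≤ ∑ j, μ.m (U i j) := fun i =>
    calc μ.m (F i) ≤ μ.m (⋃ j ∈ Finset.univ, U i j) :=
          μ.m_mono (.of_isClosed (hF i).1)
            (isSetRing_inAlg.biUnion_mem _ fun j _ => hUalg i j) (by simpa using hFU i)
      _ ≤ ∑ j, μ.m (U i j) :=
          addContent_biUnion_le (m := μ.toAddContent) isSetRing_inAlg fun j _ => hUalg i j
  calc ∑ i, μ.m (F i) ≤ ∑ i, ∑ j, μ.m (U i j) := Finset.sum_le_sum fun i _ => hF_le i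
    _ = ∑ p : Σ i, Fin (J i), μ.m (s p.1 p.2 • U p.1 p.2) := by
        rw [Fintype.sum_sigma]
        simp only [μ.invariant _ _ (hUalg _ _)]
    _ ≤ ∑ j, μ.m (B.get j) :=
        sum_addContent_le_of_pairwiseDisjoint_fibers (m := μ.toAddContent) isSetRing_inAlg
          (fun p => k p.1 p.2) (fun p => .of_isOpen ((hU _ _).smul _)) hB
          (fun p => hsUB _ _) hdisj

noncomputable def sumOsupp (a : List C(X, ℝ≥0)) : ℝ≥0∞ := (a.map fun f => μ.m (osupp f)).sum

theorem sumOsupp_eq_sum_get (a : List C(X, ℝ≥0)) :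
    μ.sumOsupp a = ∑ i : Fin a.length, μ.m (osupp (a.get i)) := by
  rw [sumOsupp, ← Fin.sum_univ_fun_getElem]
  rfl

theorem sumOsupp_append (a b : List C(X, ℝ≥0)) :
    μ.sumOsupp (a ++ b) = μ.sumOsupp a + μ.sumOsupp b := by
  simp [sumOsupp]

theorem sumOsupp_cutList (a : List C(X, ℝ≥0)) (ε : ℝ≥0) :
    μ.sumOsupp (cutList a ε) = (a.map fun f => μ.m (osupp (cutFun f ε))).sum := by
  simp [sumOsupp, cutList, Function.comp_def]

theorem sumOsupp_cutList_le (a : List C(X, ℝ≥0)) (ε : ℝ≥0) :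
    μ.sumOsupp (cutList a ε) ≤ μ.sumOsupp a := by
  rw [sumOsupp_cutList]
  exact List.sum_le_sum fun f _ =>
    μ.m_mono (.of_isOpen (isOpen_osupp _)) (.of_isOpen (isOpen_osupp f)) (osupp_cutFun_subset f ε)

theorem sumOsupp_eq_iSup_cutList (a : List C(X, ℝ≥0)) :
    μ.sumOsupp a = ⨆ n : ℕ, μ.sumOsupp (cutList a ((n : ℝ≥0) + 1)⁻¹) := by
  simp only [sumOsupp_cutList]
  rw [sumOsupp, List.map_congr_left fun f _ => μ.m_osupp_eq_iSup f]
  exact ENNReal.list_sum_map_iSup_of_monotone fun f n n' hn => μ.m_mono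
    (.of_isOpen (isOpen_osupp _)) (.of_isOpen (isOpen_osupp _)) (monotone_osupp_cutFun_inv f hn)

theorem sumOsupp_cutList_le_of_dynSubeq [ContinuousConstSMul G X] {a b : List C(X, ℝ≥0)}
    (hab : DynSubeq G a b) {c : ℝ≥0} (hc : 0 < c) :
    μ.sumOsupp (cutList a c) ≤ μ.sumOsupp b := by
  have hlen : (a.map osupp).length = a.length := List.length_map _
  have hcover := μ.sum_le_of_setSubeq hab
    (fun j => by simpa using InAlg.of_isOpen (isOpen_osupp (b.get (j.cast (List.length_map _)))))
    (F := fun i => {x | c ≤ a.get (i.cast hlen) x})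
    fun i => ⟨isClosed_le continuous_const (ContinuousMap.continuous _),
      fun x hx => by simpa [osupp] using (hc.trans_le hx).ne'⟩
  calc μ.sumOsupp (cutList a c) ≤ ∑ i : Fin a.length, μ.m {x | c ≤ a.get i x} := by
        rw [sumOsupp_cutList, ← Fin.sum_univ_fun_getElem]
        refine Finset.sum_le_sum fun i _ => μ.m_mono (.of_isOpen (isOpen_osupp _))
          (.of_isClosed (isClosed_le continuous_const (ContinuousMap.continuous _))) ?_
        rw [osupp_cutFun]
        exact Set.ofPred_subset_ofPred.2 fun x hx => hx.le
    _ = ∑ i : Fin (a.map osupp).length, μ.m {x | c ≤ a.get (i.cast hlen) x} :=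
        (Fintype.sum_equiv (finCongr hlen) _ _ fun _ => rfl).symm
    _ ≤ _ := hcover
    _ = μ.sumOsupp b := by
        simp only [List.get_eq_getElem, Fin.sum_univ_fun_getElem, List.map_map]
        rfl

theorem sumOsupp_eq_iSup_pos_cutList (a : List C(X, ℝ≥0)) :
    μ.sumOsupp a = ⨆ (ε : ℝ≥0) (_ : 0 < ε), μ.sumOsupp (cutList a ε) := by
  refine le_antisymm ?_ (iSup₂_le fun ε _ => μ.sumOsupp_cutList_le a ε)
  rw [sumOsupp_eq_iSup_cutList]
  exact iSup_le fun n => le_iSup₂_of_le ((n : ℝ≥0) + 1)⁻¹ (by positivity) le_rfl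

theorem sumOsupp_mono_of_dynSubeq [ContinuousConstSMul G X] {a b : List C(X, ℝ≥0)}
    (hab : DynSubeq G a b) : μ.sumOsupp a ≤ μ.sumOsupp b := by
  rw [sumOsupp_eq_iSup_cutList]
  exact iSup_le fun n => μ.sumOsupp_cutList_le_of_dynSubeq hab (by positivity)

noncomputable def toDynState [ContinuousConstSMul G X] : DynState X G where
  toFun := μ.sumOsupp
  mono _ _ := μ.sumOsupp_mono_of_dynSubeq
  additive := μ.sumOsupp_append
  zero' := by simp [sumOsupp]

end InvRegPremeasure

theorem state_of_premeasure_general {X : Type*} [TopologicalSpace X]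
    {G : Type*} [Group G] [MulAction G X]
    (hG : ∀ g : G, Continuous fun x : X => g • x)
    (μ : InvRegPremeasure X G) :
    ∃ D : DynState X G,
      (∀ a : List C(X, ℝ≥0),
        D.toFun a = ∑ i : Fin a.length, μ.m (osupp (a.get i))) ∧
      D.LSC := by
  have : ContinuousConstSMul G X := ⟨hG⟩
  exact ⟨μ.toDynState, μ.sumOsupp_eq_sum_get, μ.sumOsupp_eq_iSup_pos_cutList⟩

/-- **Proposition 3.5.** Every `G`-invariant regular premeasure `μ` induces a well-defined
lower semi-continuous state `D_μ` on `W(X, G)` with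
`D_μ([(f₁, …, fₙ)]) = Σᵢ μ(supp fᵢ)`. -/
theorem state_of_premeasure {X : Type*} [TopologicalSpace X] [CompactSpace X]
    [T2Space X] [TopologicalSpace.MetrizableSpace X]
    {G : Type*} [Group G] [MulAction G X]
    (hG : ∀ g : G, Continuous fun x : X => g • x)
    (μ : InvRegPremeasure X G) :
    ∃ D : DynState X G,
      (∀ a : List C(X, ℝ≥0),
        D.toFun a = ∑ i : Fin a.length, μ.m (osupp (a.get i))) ∧
      D.LSC :=
  state_of_premeasure_general hG μ
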